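/- arXiv:1807.08606 — 3 statements merged into one kernel-verified Lean document; each statement's English description precedes it below -/
import Mathlib

section
/- Let P(z) = Σ_{k=0}^n p_k z^k be a complex polynomial of degree at most n. Then sup_{|z|≤1} |P'(z)| ≤ n · sup_{|z|≤1} |P(z)|. -/
/-! If `‖P'(z)‖ > n M` at a point `z` of the unit circle, where `M` bounds `‖P‖` on the unit disk,
write `P'(z) = n u z ^ (n - 1)` with `‖u‖ > M`. Applying the maximum modulus principle to the
reflected polynomial `z ^ n P(1 / z)` gives `‖P(w)‖ ≤ M ‖w‖ ^ n` for `‖w‖ ≥ 1` and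
`‖coeff P n‖ ≤ M`, so `R = u X ^ n - P` is nonconstant with all its roots in the open unit disk.
By Gauss–Lucas so are the roots of `R'`, yet `R'(z) = 0`. Hence `‖P'‖ ≤ n M` on the circle, and
by maximum modulus on the whole disk. -/

open Polynomial Metric

theorem Complex.norm_le_of_forall_mem_sphere_norm_le {F : Type*} [NormedAddCommGroup F]
    [NormedSpace ℂ F] {f : ℂ → F} (hf : Differentiable ℂ f) {c : ℂ} {r C : ℝ} (hr : r ≠ 0)
    (h : ∀ z ∈ sphere c r, ‖f z‖ ≤ C) {z : ℂ} (hz : z ∈ closedBall c r) : ‖f z‖ ≤ C :=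
  Complex.norm_le_of_forall_mem_frontier_norm_le isBounded_closedBall hf.diffContOnCl
    (by rwa [frontier_closedBall c hr]) (by rwa [closure_closedBall])

namespace Polynomial

theorem eval_reflect_inv_mul_pow {K : Type*} [Field K] {P : K[X]} {n : ℕ} (hP : P.natDegree ≤ n)
    {z : K} (hz : z ≠ 0) : (reflect n P).eval z⁻¹ * z ^ n = P.eval z := by
  have : Invertible z := invertibleOfNonzero hz
  simpa [invOf_eq_inv] using eval₂_reflect_mul_pow (RingHom.id K) z n P hP

theorem degree_C_mul_X_pow_sub_pos {R : Type*} [Ring R] {p : R[X]} {n : ℕ} {u : R} (hn : n ≠ 0)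
    (hu : p.coeff n ≠ u) : 0 < (C u * X ^ n - p).degree := by
  have hcoeff : (C u * X ^ n - p).coeff n ≠ 0 := by
    rw [coeff_sub, coeff_C_mul_X_pow, if_pos rfl, sub_ne_zero]
    exact hu.symm
  rw [← natDegree_pos_iff_degree_pos]
  exact (Nat.pos_of_ne_zero hn).trans_le (le_natDegree_of_ne_zero hcoeff)

variable {P : ℂ[X]} {n : ℕ} {M : ℝ}

theorem norm_eval_reflect_le (hP : P.natDegree ≤ n)
    (hM : ∀ w ∈ closedBall (0 : ℂ) 1, ‖P.eval w‖ ≤ M) {w : ℂ} (hw : w ∈ closedBall (0 : ℂ) 1) :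
    ‖(reflect n P).eval w‖ ≤ M := by
  refine Complex.norm_le_of_forall_mem_sphere_norm_le (reflect n P).differentiable one_ne_zero
    (fun z hz => ?_) hw
  have hz₁ : ‖z⁻¹‖ = 1 := by rw [norm_inv, mem_sphere_zero_iff_norm.mp hz, inv_one]
  have hz₀ : z⁻¹ ≠ 0 := norm_ne_zero_iff.mp (by rw [hz₁]; exact one_ne_zero)
  have h := congrArg norm (eval_reflect_inv_mul_pow hP hz₀)
  rw [inv_inv, norm_mul, norm_pow, hz₁, one_pow, mul_one] at h
  exact h ▸ hM _ (mem_closedBall_zero_iff.mpr hz₁.le)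

theorem norm_coeff_le (hP : P.natDegree ≤ n) (hM : ∀ w ∈ closedBall (0 : ℂ) 1, ‖P.eval w‖ ≤ M) :
    ‖P.coeff n‖ ≤ M := by
  simpa [← coeff_zero_eq_eval_zero, coeff_reflect] using
    norm_eval_reflect_le hP hM (mem_closedBall_self zero_le_one)

theorem norm_eval_le_mul_norm_pow (hP : P.natDegree ≤ n)
    (hM : ∀ w ∈ closedBall (0 : ℂ) 1, ‖P.eval w‖ ≤ M) {z : ℂ} (hz : 1 ≤ ‖z‖) :
    ‖P.eval z‖ ≤ M * ‖z‖ ^ n := by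
  have hz₀ : z ≠ 0 := norm_pos_iff.mp (zero_lt_one.trans_le hz)
  have hz_inv : z⁻¹ ∈ closedBall (0 : ℂ) 1 := by
    rw [mem_closedBall_zero_iff, norm_inv]; exact inv_le_one_of_one_le₀ hz
  rw [← eval_reflect_inv_mul_pow hP hz₀, norm_mul, norm_pow]
  gcongr
  exact norm_eval_reflect_le hP hM hz_inv

theorem rootSet_C_mul_X_pow_sub_subset_ball (hP : P.natDegree ≤ n)
    (hM : ∀ w ∈ closedBall (0 : ℂ) 1, ‖P.eval w‖ ≤ M) {u : ℂ} (hu : M < ‖u‖) :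
    (C u * X ^ n - P).rootSet ℂ ⊆ ball 0 1 := by
  intro r hr
  rw [mem_rootSet, coe_aeval_eq_eval, eval_sub, eval_mul, eval_C, eval_pow, eval_X,
    sub_eq_zero] at hr
  rw [mem_ball_zero_iff]
  by_contra! hr₁
  have h := norm_eval_le_mul_norm_pow hP hM hr₁
  rw [← hr.2, norm_mul, norm_pow] at h
  exact hu.not_ge (le_of_mul_le_mul_right h (pow_pos (zero_lt_one.trans_le hr₁) n))

theorem norm_eval_derivative_le_of_mem_sphere (hP : P.natDegree ≤ n)
    (hM : ∀ w ∈ closedBall (0 : ℂ) 1, ‖P.eval w‖ ≤ M) {z : ℂ} (hz : z ∈ sphere (0 : ℂ) 1) :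
    ‖P.derivative.eval z‖ ≤ n * M := by
  rw [mem_sphere_zero_iff_norm] at hz
  by_contra! hlt
  have hn : n ≠ 0 := by
    rintro rfl
    simp [derivative_of_natDegree_zero (Nat.le_zero.mp hP)] at hlt
  have hz₀ : z ≠ 0 := norm_ne_zero_iff.mp (by rw [hz]; exact one_ne_zero)
  set u := P.derivative.eval z / (n * z ^ (n - 1))
  have hu : M < ‖u‖ := by
    rw [norm_div, norm_mul, norm_pow, hz, one_pow, mul_one, Complex.norm_natCast,
      lt_div_iff₀ (by positivity), mul_comm]
    exact hlt
  have hRz : (C u * X ^ n - P).derivative.eval z = 0 := by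
    simp only [derivative_sub, derivative_C_mul_X_pow, eval_sub, eval_C, eval_mul, eval_pow,
      eval_X, u]
    field_simp
    ring
  have hdeg : 0 < (C u * X ^ n - P).degree :=
    degree_C_mul_X_pow_sub_pos hn fun h => hu.not_ge (h ▸ norm_coeff_le hP hM)
  have hz_root : z ∈ (C u * X ^ n - P).derivative.rootSet ℂ := by
    rw [mem_rootSet, coe_aeval_eq_eval]
    exact ⟨derivative_ne_zero.mpr (natDegree_pos_iff_degree_pos.mpr hdeg).ne', hRz⟩
  have hz_ball : z ∈ ball (0 : ℂ) 1 :=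
    convexHull_min (rootSet_C_mul_X_pow_sub_subset_ball hP hM hu) (convex_ball 0 1)
      (rootSet_derivative_subset_convexHull_rootSet hdeg hz_root)
  exact (mem_ball_zero_iff.mp hz_ball).ne hz

theorem norm_eval_derivative_le (hP : P.natDegree ≤ n)
    (hM : ∀ w ∈ closedBall (0 : ℂ) 1, ‖P.eval w‖ ≤ M) {z : ℂ} (hz : z ∈ closedBall (0 : ℂ) 1) :
    ‖P.derivative.eval z‖ ≤ n * M :=
  Complex.norm_le_of_forall_mem_sphere_norm_le P.derivative.differentiable one_ne_zero
    (fun _ hw => norm_eval_derivative_le_of_mem_sphere hP hM hw) hz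

end Polynomial

/-- Bernstein's inequality for complex polynomials: if `deg P ≤ n`, then
`sup_{|z|≤1} |P'(z)| ≤ n · sup_{|z|≤1} |P(z)|`. -/
theorem bernstein_inequality (n : ℕ) (P : Polynomial ℂ) (hP : P.natDegree ≤ n) :
    sSup ((fun z => ‖(Polynomial.derivative P).eval z‖) '' Metric.closedBall (0 : ℂ) 1) ≤
      (n : ℝ) * sSup ((fun z => ‖P.eval z‖) '' Metric.closedBall (0 : ℂ) 1) := by
  set M := sSup ((fun z => ‖P.eval z‖) '' Metric.closedBall (0 : ℂ) 1)
  have hbdd : BddAbove ((fun z => ‖P.eval z‖) '' Metric.closedBall (0 : ℂ) 1) :=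
    ((isCompact_closedBall 0 1).image (continuous_norm.comp P.continuous)).bddAbove
  have hM : ∀ w ∈ closedBall (0 : ℂ) 1, ‖P.eval w‖ ≤ M := fun w hw =>
    le_csSup hbdd (Set.mem_image_of_mem _ hw)
  have hM₀ : 0 ≤ M := (norm_nonneg _).trans (hM 0 (mem_closedBall_self zero_le_one))
  refine Real.sSup_le ?_ (by positivity)
  rintro _ ⟨z, hz, rfl⟩
  exact norm_eval_derivative_le hP hM hz
end

section
/- Let f : V → ℝ be defined on a real inner product space by f(X) = ½‖Y − X‖²_2 + λ‖X‖ where ‖·‖ is a norm, ‖·‖_2 the inner product norm, and λ > 0. If X̂ minimizes f, then ‖Y − X̂‖' ≤ λ and ⟨Y − X̂, X̂⟩ = λ‖X̂‖, where ‖·‖' is the dual norm. -/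
open RealInnerProductSpace

/-- Dual norm of a norm `n` on a real inner product space. -/
noncomputable def dualNorm {V : Type*} [NormedAddCommGroup V] [InnerProductSpace ℝ V]
    (n : V → ℝ) (z : V) : ℝ :=
  sSup {r : ℝ | ∃ x : V, n x ≤ 1 ∧ r = ⟪z, x⟫}

/-- Optimality conditions for norm-regularized least squares (Proposition 2). -/
theorem optimality_conditions {V : Type*} [NormedAddCommGroup V] [InnerProductSpace ℝ V]
    [FiniteDimensional ℝ V]
    (n : V → ℝ)
    (hn_nonneg : ∀ x, 0 ≤ n x)
    (hn_triangle : ∀ x y, n (x + y) ≤ n x + n y)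
    (hn_smul : ∀ (c : ℝ) (x : V), n (c • x) = |c| * n x)
    (hn_def : ∀ x, n x = 0 → x = 0)
    (lam : ℝ) (hlam : 0 < lam)
    (Y Xhat : V)
    (hmin : ∀ X : V, (1 / 2) * ‖Y - Xhat‖ ^ 2 + lam * n Xhat ≤
      (1 / 2) * ‖Y - X‖ ^ 2 + lam * n X) :
    dualNorm n (Y - Xhat) ≤ lam ∧ ⟪Y - Xhat, Xhat⟫ = lam * n Xhat := by
  set Z := Y - Xhat with hZ
  have key : ∀ (v : V) (t : ℝ),
      t * ⟪Z, v⟫ ≤ lam * n (Xhat + t • v) - lam * n Xhat + t ^ 2 * ‖v‖ ^ 2 / 2 := by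
    intro v t
    have h := hmin (Xhat + t • v)
    have hY : Y - (Xhat + t • v) = Z - t • v := by rw [hZ]; abel
    rw [hY] at h
    have hexp : ‖Z - t • v‖ ^ 2 = ‖Z‖ ^ 2 - 2 * (t * ⟪Z, v⟫) + t ^ 2 * ‖v‖ ^ 2 := by
      rw [norm_sub_sq_real, real_inner_smul_right, norm_smul, mul_pow,
        Real.norm_eq_abs, sq_abs]
    nlinarith [h, hexp]
  constructor
  · apply Real.sSup_le
    · rintro r ⟨x, hx, rfl⟩
      refine le_of_forall_pos_le_add fun ε hε => ?_
      have hx2 : (0:ℝ) < ‖x‖ ^ 2 + 1 := by positivity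
      set t := min (2 * ε / (‖x‖ ^ 2 + 1)) 1 with ht
      have ht0 : 0 < t := lt_min (by positivity) one_pos
      have hk := key x t
      have htn : n (Xhat + t • x) ≤ n Xhat + t := by
        calc n (Xhat + t • x) ≤ n Xhat + n (t • x) := hn_triangle _ _
          _ = n Xhat + |t| * n x := by rw [hn_smul]
          _ ≤ n Xhat + t := by
              rw [abs_of_pos ht0]
              nlinarith [hn_nonneg x]
      have h2 : t * ‖x‖ ^ 2 / 2 ≤ ε := by
        have hle : t ≤ 2 * ε / (‖x‖ ^ 2 + 1) := min_le_left _ _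
        have := (le_div_iff₀ hx2).mp hle
        nlinarith [ht0]
      have h3 : t * ⟪Z, x⟫ ≤ t * (lam + ε) := by
        have := mul_le_mul_of_nonneg_left h2 ht0.le
        nlinarith [hk, htn]
      exact le_of_mul_le_mul_left h3 ht0
    · exact hlam.le
  · apply le_antisymm
    · refine le_of_forall_pos_le_add fun ε hε => ?_
      have hx2 : (0:ℝ) < ‖Xhat‖ ^ 2 + 1 := by positivity
      set t := min (2 * ε / (‖Xhat‖ ^ 2 + 1)) (1/2) with ht
      have ht0 : 0 < t := lt_min (by positivity) (by norm_num)
      have ht1 : t ≤ 1/2 := min_le_right _ _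
      have hk := key Xhat t
      have hXe : Xhat + t • Xhat = (1 + t) • Xhat := by rw [add_smul, one_smul]
      rw [hXe, hn_smul, abs_of_pos (by linarith : (0:ℝ) < 1 + t)] at hk
      have h2 : t * ‖Xhat‖ ^ 2 / 2 ≤ ε := by
        have hle : t ≤ 2 * ε / (‖Xhat‖ ^ 2 + 1) := min_le_left _ _
        have := (le_div_iff₀ hx2).mp hle
        nlinarith [ht0]
      have h3 : t * ⟪Z, Xhat⟫ ≤ t * (lam * n Xhat + ε) := by
        have := mul_le_mul_of_nonneg_left h2 ht0.le
        nlinarith [hk]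
      exact le_of_mul_le_mul_left h3 ht0
    · refine le_of_forall_pos_le_add fun ε hε => ?_
      have hx2 : (0:ℝ) < ‖Xhat‖ ^ 2 + 1 := by positivity
      set t := min (2 * ε / (‖Xhat‖ ^ 2 + 1)) (1/2) with ht
      have ht0 : 0 < t := lt_min (by positivity) (by norm_num)
      have ht1 : t ≤ 1/2 := min_le_right _ _
      have hk := key Xhat (-t)
      have hXe : Xhat + (-t) • Xhat = (1 - t) • Xhat := by
        rw [sub_smul, one_smul, neg_smul]; abel
      rw [hXe, hn_smul, abs_of_pos (by linarith : (0:ℝ) < 1 - t)] at hk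
      have h2 : t * ‖Xhat‖ ^ 2 / 2 ≤ ε := by
        have hle : t ≤ 2 * ε / (‖Xhat‖ ^ 2 + 1) := min_le_left _ _
        have := (le_div_iff₀ hx2).mp hle
        nlinarith [ht0]
      have h3 : t * (lam * n Xhat) ≤ t * (⟪Z, Xhat⟫ + ε) := by
        have := mul_le_mul_of_nonneg_left h2 ht0.le
        nlinarith [hk]
      exact le_of_mul_le_mul_left h3 ht0
end

section
/- Let ‖·‖_A be the matrix atomic norm on ℂ^{M×N} with the atom set A_m = { a_X(f) a_Y(g)^T : f, g ∈ [0,1] }. For any X admitting a decomposition X = Σ_{k=1}^K s_k a_X(f_k) a_Y(g_k)^T, the SDP value inf { Tr( T(u)/(2M) + T(v)/(2N) ) : [[T(u), X],[X^H, T(v)]] ⪰ 0, T(u), T(v) Hermitian Toeplitz } is at most Σ_k |s_k|; consequently it is at most ‖X‖_A. -/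
open Matrix ComplexOrder

noncomputable def aVec (M : ℕ) (f : ℝ) : Fin M → ℂ :=
  fun m => Complex.exp (-(2 * Real.pi * Complex.I * (m : ℕ) * f))

noncomputable def atomSet (M N : ℕ) : Set (Matrix (Fin M) (Fin N) ℂ) :=
  {A | ∃ f ∈ Set.Icc (0 : ℝ) 1, ∃ g ∈ Set.Icc (0 : ℝ) 1,
    A = Matrix.of fun i j => aVec M f i * aVec N g j}

noncomputable def atomicNorm {M N : ℕ} (𝒜 : Set (Matrix (Fin M) (Fin N) ℂ))
    (X : Matrix (Fin M) (Fin N) ℂ) : ℝ :=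
  sInf {c : ℝ | ∃ (K : ℕ) (s : Fin K → ℂ) (A : Fin K → Matrix (Fin M) (Fin N) ℂ),
    (∀ k, A k ∈ 𝒜) ∧ X = ∑ k, s k • A k ∧ c = ∑ k, ‖s k‖}

/-- A matrix is Toeplitz if entries depend only on the difference of indices. -/
def IsToeplitz {n : ℕ} (T : Matrix (Fin n) (Fin n) ℂ) : Prop :=
  ∀ i j i' j' : Fin n, (i : ℤ) - (j : ℤ) = (i' : ℤ) - (j' : ℤ) → T i j = T i' j'

/-- The value of the matrix atomic norm SDP for `X`. -/
noncomputable def sdpValue (M N : ℕ) (X : Matrix (Fin M) (Fin N) ℂ) : ℝ :=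
  sInf {c : ℝ | ∃ (Tu : Matrix (Fin M) (Fin M) ℂ) (Tv : Matrix (Fin N) (Fin N) ℂ),
    Tu.IsHermitian ∧ Tv.IsHermitian ∧ IsToeplitz Tu ∧ IsToeplitz Tv ∧
    (Matrix.fromBlocks Tu X Xᴴ Tv).PosSemidef ∧
    c = (Matrix.trace Tu).re / (2 * M) + (Matrix.trace Tv).re / (2 * N)}

/-! Each term `s a_X(f) a_Y(g)ᵀ` of an atomic decomposition is the off-diagonal block of the
rank-one positive semidefinite matrix `w wᴴ`, `w = (s/√‖s‖ · a_X(f), √‖s‖ · conj a_Y(g))`, whose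
diagonal blocks `‖s‖ a_X aᴴ_X` and `‖s‖ conj a_Y a_Yᵀ` are Toeplitz, since
`a(f)_i conj (a(f)_j) = exp (-2πi f (i - j))`. Summing over the terms gives a feasible point of
the SDP whose traces are `M ∑ ‖s_k‖` and `N ∑ ‖s_k‖`, hence objective at most `∑ ‖s_k‖`;
the infimum over all decompositions then bounds the SDP value by the atomic norm. -/

open scoped ComplexConjugate

namespace Matrix

variable {α : Type*} {l m n o : Type*}

theorem vecMulVec_sumElim [Mul α] (a : m → α) (b : n → α) (c : l → α) (d : o → α) :
    vecMulVec (Sum.elim a b) (Sum.elim c d) =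
      fromBlocks (vecMulVec a c) (vecMulVec a d) (vecMulVec b c) (vecMulVec b d) := by
  ext (i | i) (j | j) <;> rfl

theorem fromBlocks_sum [AddCommMonoid α] {ι : Type*} (s : Finset ι) (A : ι → Matrix n l α)
    (B : ι → Matrix n m α) (C : ι → Matrix o l α) (D : ι → Matrix o m α) :
    fromBlocks (∑ i ∈ s, A i) (∑ i ∈ s, B i) (∑ i ∈ s, C i) (∑ i ∈ s, D i) =
      ∑ i ∈ s, fromBlocks (A i) (B i) (C i) (D i) := by
  classical
  induction s using Finset.induction_on with
  | empty => simp
  | insert i s hi ih => simp only [Finset.sum_insert hi, ← ih, fromBlocks_add]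

theorem PosSemidef.of_fromBlocks₁₁ {R : Type*} [Ring R] [PartialOrder R] [StarRing R]
    {A : Matrix m m R} {B : Matrix m n R} {C : Matrix n m R} {D : Matrix n n R}
    (h : (fromBlocks A B C D).PosSemidef) : A.PosSemidef :=
  h.submatrix Sum.inl

theorem PosSemidef.of_fromBlocks₂₂ {R : Type*} [Ring R] [PartialOrder R] [StarRing R]
    {A : Matrix m m R} {B : Matrix m n R} {C : Matrix n m R} {D : Matrix n n R}
    (h : (fromBlocks A B C D).PosSemidef) : D.PosSemidef :=
  h.submatrix Sum.inr

variable [Fintype m] [Fintype n] {𝕜 : Type*} [RCLike 𝕜]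

theorem posSemidef_fromBlocks_smul_vecMulVec (s : 𝕜) (a : m → 𝕜) (b : n → 𝕜) :
    (fromBlocks (‖s‖ • vecMulVec a (star a)) (s • vecMulVec a b) (s • vecMulVec a b)ᴴ
      (‖s‖ • vecMulVec (star b) b)).PosSemidef := by
  set r : 𝕜 := ((√‖s‖ : ℝ) : 𝕜)
  have hr : conj r = r := by simp [r]
  have hrr : r * r = ‖s‖ := by
    simp only [r, ← RCLike.ofReal_mul, Real.mul_self_sqrt (norm_nonneg s)]
  set c := s / r with hc
  have hcr : c * r = s := div_mul_cancel_of_imp fun h0 => by simpa [r] using h0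
  have hcr' : conj c * r = conj s := by rw [← hr, ← map_mul, hcr]
  have hcc : c * conj c = ‖s‖ := by
    rw [hc, map_div₀, hr, div_mul_div_comm, hrr, RCLike.mul_conj, sq, mul_self_div_self]
  clear_value c
  convert posSemidef_vecMulVec_self_star (Sum.elim (c • a) (r • star b)) using 1
  rw [Function.star_sumElim, vecMulVec_sumElim]
  congr 1 <;> ext i j <;>
    simp only [conjTranspose_apply, smul_apply, vecMulVec_apply, Pi.star_apply, Pi.smul_apply,
      RCLike.star_def, RCLike.real_smul_eq_coe_mul, star_smul, star_mul', star_star, smul_eq_mul, hr]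
  · linear_combination (-(a i * conj (a j))) * hcc
  · linear_combination (-(a i * b j)) * hcr
  · linear_combination (-(conj (a j) * conj (b i))) * hcr'
  · linear_combination (-(conj (b i) * b j)) * hrr

end Matrix

open Complex in
theorem star_aVec (n : ℕ) (f : ℝ) : star (aVec n f) = aVec n (-f) := by
  ext m
  simp only [aVec, Pi.star_apply, RCLike.star_def, ← exp_conj, map_neg, map_mul, conj_ofReal,
    conj_I, conj_natCast, map_ofNat, ofReal_neg]
  ring_nf

open Complex in
theorem aVec_mul_aVec_neg (n : ℕ) (f : ℝ) (i j : Fin n) :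
    aVec n f i * aVec n (-f) j = exp (-(2 * Real.pi * I * f * (((i : ℤ) - j : ℤ) : ℂ))) := by
  simp only [aVec, ← exp_add]
  push_cast
  ring_nf

theorem aVec_dotProduct_star (n : ℕ) (f : ℝ) : aVec n f ⬝ᵥ star (aVec n f) = n := by
  rw [star_aVec]
  simp [dotProduct, aVec_mul_aVec_neg]

theorem IsToeplitz.smul {n : ℕ} {T : Matrix (Fin n) (Fin n) ℂ} (hT : IsToeplitz T) (c : ℝ) :
    IsToeplitz (c • T) := fun i j i' j' h => by
  simp only [Matrix.smul_apply, hT i j i' j' h]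

theorem IsToeplitz.sum {n : ℕ} {ι : Type*} (s : Finset ι) {T : ι → Matrix (Fin n) (Fin n) ℂ}
    (hT : ∀ k ∈ s, IsToeplitz (T k)) : IsToeplitz (∑ k ∈ s, T k) := fun i j i' j' h => by
  simp only [Matrix.sum_apply]
  exact Finset.sum_congr rfl fun k hk => hT k hk i j i' j' h

theorem isToeplitz_vecMulVec_aVec_star (n : ℕ) (f : ℝ) :
    IsToeplitz (vecMulVec (aVec n f) (star (aVec n f))) := fun i j i' j' h => by
  simp only [vecMulVec_apply, star_aVec, aVec_mul_aVec_neg, h]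

theorem isToeplitz_vecMulVec_star_aVec (n : ℕ) (f : ℝ) :
    IsToeplitz (vecMulVec (star (aVec n f)) (aVec n f)) := by
  simpa [star_aVec] using isToeplitz_vecMulVec_aVec_star n (-f)

theorem sdpValue_le_of_feasible {M N : ℕ} {X : Matrix (Fin M) (Fin N) ℂ}
    {Tu : Matrix (Fin M) (Fin M) ℂ} {Tv : Matrix (Fin N) (Fin N) ℂ}
    (hTu : IsToeplitz Tu) (hTv : IsToeplitz Tv) (hpsd : (fromBlocks Tu X Xᴴ Tv).PosSemidef) :
    sdpValue M N X ≤ Tu.trace.re / (2 * M) + Tv.trace.re / (2 * N) := by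
  refine csInf_le ⟨0, ?_⟩ ⟨Tu, Tv, hpsd.of_fromBlocks₁₁.isHermitian,
    hpsd.of_fromBlocks₂₂.isHermitian, hTu, hTv, hpsd, rfl⟩
  rintro _ ⟨A, D, -, -, -, -, h, rfl⟩
  have hA := (Complex.le_def.mp h.of_fromBlocks₁₁.trace_nonneg).1
  have hD := (Complex.le_def.mp h.of_fromBlocks₂₂.trace_nonneg).1
  simp only [Complex.zero_re] at hA hD
  positivity

theorem natCast_mul_div_two_mul_le (n : ℕ) {x : ℝ} (hx : 0 ≤ x) : n * x / (2 * n) ≤ x / 2 := by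
  rcases n.eq_zero_or_pos with rfl | hn
  · simp only [Nat.cast_zero, zero_mul, mul_zero, div_zero]
    positivity
  · rw [mul_comm (2 : ℝ), mul_div_mul_left _ _ (by positivity)]

theorem sdpValue_le_sum_norm {M N K : ℕ} (s : Fin K → ℂ) (f g : Fin K → ℝ)
    {X : Matrix (Fin M) (Fin N) ℂ}
    (hX : X = ∑ k, s k • vecMulVec (aVec M (f k)) (aVec N (g k))) :
    sdpValue M N X ≤ ∑ k, ‖s k‖ := by
  set Tu := ∑ k, ‖s k‖ • vecMulVec (aVec M (f k)) (star (aVec M (f k)))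
  set Tv := ∑ k, ‖s k‖ • vecMulVec (star (aVec N (g k))) (aVec N (g k))
  have hpsd : (fromBlocks Tu X Xᴴ Tv).PosSemidef := by
    rw [hX, conjTranspose_sum, fromBlocks_sum]
    exact posSemidef_sum _ fun k _ => posSemidef_fromBlocks_smul_vecMulVec _ _ _
  have hTu : Tu.trace.re = M * ∑ k, ‖s k‖ := by
    simp [Tu, trace_sum, trace_smul, trace_vecMulVec, aVec_dotProduct_star, Finset.mul_sum,
      mul_comm]
  have hTv : Tv.trace.re = N * ∑ k, ‖s k‖ := by
    simp [Tv, trace_sum, trace_smul, trace_vecMulVec, dotProduct_comm, aVec_dotProduct_star,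
      Finset.mul_sum, mul_comm]
  have hS : 0 ≤ ∑ k, ‖s k‖ := by positivity
  calc sdpValue M N X ≤ Tu.trace.re / (2 * M) + Tv.trace.re / (2 * N) :=
        sdpValue_le_of_feasible
          (IsToeplitz.sum _ fun k _ => (isToeplitz_vecMulVec_aVec_star M (f k)).smul _)
          (IsToeplitz.sum _ fun k _ => (isToeplitz_vecMulVec_star_aVec N (g k)).smul _) hpsd
    _ ≤ (∑ k, ‖s k‖) / 2 + (∑ k, ‖s k‖) / 2 := by
        rw [hTu, hTv]
        exact add_le_add (natCast_mul_div_two_mul_le M hS) (natCast_mul_div_two_mul_le N hS)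
    _ = ∑ k, ‖s k‖ := add_halves _

theorem sdpValue_le_of_mem_atomSet {M N K : ℕ} (s : Fin K → ℂ)
    (A : Fin K → Matrix (Fin M) (Fin N) ℂ) (hA : ∀ k, A k ∈ atomSet M N)
    {X : Matrix (Fin M) (Fin N) ℂ} (hX : X = ∑ k, s k • A k) :
    sdpValue M N X ≤ ∑ k, ‖s k‖ := by
  choose f _ g _ hA using hA
  exact sdpValue_le_sum_norm s f g (by simp_rw [hX, hA]; rfl)

theorem sdpValue_le_general {M N : ℕ}
    (K : ℕ) (s : Fin K → ℂ) (f g : Fin K → ℝ)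
    (hf : ∀ k, f k ∈ Set.Icc (0 : ℝ) 1) (hg : ∀ k, g k ∈ Set.Icc (0 : ℝ) 1)
    (X : Matrix (Fin M) (Fin N) ℂ)
    (hX : X = ∑ k, s k • (Matrix.of fun i j => aVec M (f k) i * aVec N (g k) j)) :
    sdpValue M N X ≤ ∑ k, ‖s k‖ ∧
      sdpValue M N X ≤ atomicNorm (atomSet M N) X := by
  refine ⟨sdpValue_le_sum_norm s f g hX, le_csInf ?_ ?_⟩
  · exact ⟨_, K, s, _, fun k => ⟨f k, hf k, g k, hg k, rfl⟩, hX, rfl⟩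
  · rintro _ ⟨K', s', A, hA, hX', rfl⟩
    exact sdpValue_le_of_mem_atomSet s' A hA hX'

/-- Easy direction of Theorem 1: the SDP value is at most `∑ |s_k|` for any atomic
decomposition, and consequently at most the atomic norm. -/
theorem sdpValue_le {M N : ℕ} (hM : 0 < M) (hN : 0 < N)
    (K : ℕ) (s : Fin K → ℂ) (f g : Fin K → ℝ)
    (hf : ∀ k, f k ∈ Set.Icc (0 : ℝ) 1) (hg : ∀ k, g k ∈ Set.Icc (0 : ℝ) 1)
    (X : Matrix (Fin M) (Fin N) ℂ)
    (hX : X = ∑ k, s k • (Matrix.of fun i j => aVec M (f k) i * aVec N (g k) j)) :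
    sdpValue M N X ≤ ∑ k, ‖s k‖ ∧
      sdpValue M N X ≤ atomicNorm (atomSet M N) X :=
  sdpValue_le_general K s f g hf hg X hX
end
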